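/- arXiv:0902.2429 — 14 statements merged into one kernel-verified Lean document; each statement's English description precedes it below -/
import Mathlib

section
/- Let S be a proper scoring rule and let C : ℝ^N → ℝ be a differentiable cost-function formulation for S, i.e. for all q ∈ ℝ^N the gradient ∇C(q) lies in the simplex Δ and there is a constant K with S_i(∇C(q)) = q_i − C(q) + K for all i. Then C is a convex function on ℝ^N. -/
/-!
Write `g(q)` for the gradient of `C` at `q`. Properness, applied with the truthful report `g(x)`
against the report `g(y)`, says `⟪g(x), y⟫ - C(y) ≤ ⟪g(x), x⟫ - C(x)` (the constant `K` and, since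
`g(x)` sums to one, the terms `C(·)` come out of the expected scores). That is the gradient
inequality `C(x) + ⟪g(x), y - x⟫ ≤ C(y)`, and a function lying above all its tangent hyperplanes is
convex.
-/

open Finset Set

theorem convexOn_univ_of_forall_add_apply_sub_le {𝕜 E : Type*} [Field 𝕜] [LinearOrder 𝕜]
    [IsStrictOrderedRing 𝕜] [AddCommGroup E] [Module 𝕜 E] {f : E → 𝕜} (L : E → E →ₗ[𝕜] 𝕜)
    (h : ∀ x y, f x + L x (y - x) ≤ f y) : ConvexOn 𝕜 univ f := by
  refine ⟨convex_univ, fun x _ y _ a b ha hb hab => ?_⟩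
  set z := a • x + b • y
  have hbalance : a * L z (x - z) + b * L z (y - z) = 0 := by
    have : a • (x - z) + b • (y - z) = 0 := by
      rw [show a • (x - z) + b • (y - z) = z - (a + b) • z by module, hab, one_smul, sub_self]
    simpa using congrArg (L z) this
  calc f z = a * (f z + L z (x - z)) + b * (f z + L z (y - z)) := by
        linear_combination (-f z) * hab - hbalance
    _ ≤ a * f x + b * f y := by gcongr <;> exact h z _

theorem LinearMap.apply_eq_sum_apply_single_mul {R ι : Type*} [CommSemiring R] [Fintype ι]
    [DecidableEq ι] (f : (ι → R) →ₗ[R] R) (v : ι → R) :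
    f v = ∑ i, f (Pi.single i 1) * v i := by
  conv_lhs => rw [← univ_sum_single v, map_sum]
  refine sum_congr rfl fun i _ => ?_
  rw [mul_comm, ← smul_eq_mul, ← map_smul, ← Pi.single_smul', smul_eq_mul, mul_one]

theorem sum_mul_add_const_of_sum_eq_one {ι : Type*} [Fintype ι] {w : ι → ℝ}
    (hw : ∑ i, w i = 1) (q : ι → ℝ) (c : ℝ) :
    ∑ i, w i * (q i + c) = ∑ i, w i * q i + c := by
  simp only [mul_add, sum_add_distrib, ← sum_mul, hw, one_mul]

section ScoringRule

variable {ι : Type*} [Fintype ι]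

def IsProperScoringRule (S : (ι → ℝ) → ι → ℝ) : Prop :=
  ∀ r ∈ stdSimplex ℝ ι, ∀ p ∈ stdSimplex ℝ ι, ∑ i, r i * S p i ≤ ∑ i, r i * S r i

theorem IsProperScoringRule.add_sum_mul_sub_le {S : (ι → ℝ) → ι → ℝ}
    (hS : IsProperScoringRule S) {C : (ι → ℝ) → ℝ} {g : (ι → ℝ) → ι → ℝ}
    (hg : ∀ q, g q ∈ stdSimplex ℝ ι) {K : ℝ} (hscore : ∀ q i, S (g q) i = q i - C q + K)
    (x y : ι → ℝ) : C x + ∑ i, g x i * (y i - x i) ≤ C y := by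
  have hproper := hS (g x) (hg x) (g y) (hg y)
  simp only [hscore, sub_add_eq_add_sub, add_sub_assoc,
    sum_mul_add_const_of_sum_eq_one (hg x).2] at hproper
  simp only [mul_sub, sum_sub_distrib]
  linarith

end ScoringRule

theorem cost_function_of_proper_scoring_rule_convex_general {N : ℕ}
    (S : (Fin N → ℝ) → (Fin N → ℝ))
    (hproper : ∀ r p : Fin N → ℝ,
      ((∀ i, 0 ≤ r i) ∧ ∑ i, r i = 1) → ((∀ i, 0 ≤ p i) ∧ ∑ i, p i = 1) →
      ∑ i, r i * S p i ≤ ∑ i, r i * S r i)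
    (C : (Fin N → ℝ) → ℝ)
    (hgrad : ∀ q : Fin N → ℝ,
      (∀ i, 0 ≤ fderiv ℝ C q (Pi.single i 1)) ∧
        ∑ i, fderiv ℝ C q (Pi.single i 1) = 1)
    (hscore : ∃ K : ℝ, ∀ (q : Fin N → ℝ) (i : Fin N),
      S (fun j => fderiv ℝ C q (Pi.single j 1)) i = q i - C q + K) :
    ConvexOn ℝ Set.univ C := by
  obtain ⟨K, hK⟩ := hscore
  have hS : IsProperScoringRule S := fun r hr p hp => hproper r p hr hp
  refine convexOn_univ_of_forall_add_apply_sub_le (fun x => (fderiv ℝ C x).toLinearMap)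
    fun x y => ?_
  have hexpand := (fderiv ℝ C x).toLinearMap.apply_eq_sum_apply_single_mul (y - x)
  rw [ContinuousLinearMap.coe_coe] at hexpand ⊢
  rw [hexpand]
  exact hS.add_sum_mul_sub_le hgrad hK x y

/-- The cost function of any proper scoring rule is convex. -/
theorem cost_function_of_proper_scoring_rule_convex {N : ℕ} (hN : 1 ≤ N)
    (S : (Fin N → ℝ) → (Fin N → ℝ))
    (hproper : ∀ r p : Fin N → ℝ,
      ((∀ i, 0 ≤ r i) ∧ ∑ i, r i = 1) → ((∀ i, 0 ≤ p i) ∧ ∑ i, p i = 1) →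
      ∑ i, r i * S p i ≤ ∑ i, r i * S r i)
    (C : (Fin N → ℝ) → ℝ) (hdiff : Differentiable ℝ C)
    (hgrad : ∀ q : Fin N → ℝ,
      (∀ i, 0 ≤ fderiv ℝ C q (Pi.single i 1)) ∧
        ∑ i, fderiv ℝ C q (Pi.single i 1) = 1)
    (hscore : ∃ K : ℝ, ∀ (q : Fin N → ℝ) (i : Fin N),
      S (fun j => fderiv ℝ C q (Pi.single j 1)) i = q i - C q + K) :
    ConvexOn ℝ Set.univ C :=
  cost_function_of_proper_scoring_rule_convex_general S hproper C hgrad hscore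
end

section
/- Let S be a proper scoring rule and let C : ℝ^N → ℝ be a differentiable cost-function formulation for S, i.e. for all q ∈ ℝ^N the gradient ∇C(q) lies in the simplex Δ and there is a constant K with S_i(∇C(q)) = q_i − C(q) + K for all i. Then for every q ∈ ℝ^N and every scalar d ∈ ℝ, C(q + d·e) = C(q) + d, where e is the all-ones vector. -/
/-!
Differentiating `t ↦ C (q + t • e)` gives `∇C(q + t • e) · e = ∑ i, ∂ᵢC(q + t • e) = 1`, because the gradient
lies in the simplex. Hence `t ↦ C (q + t • e) - t` has zero derivative and is constant.
-/

open Finset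

theorem Differentiable.apply_add_smul_of_fderiv_apply_eq {E F : Type*}
    [NormedAddCommGroup E] [NormedSpace ℝ E] [NormedAddCommGroup F] [NormedSpace ℝ F]
    {f : E → F} (hf : Differentiable ℝ f) {v : E} {c : F} (hfv : ∀ x, fderiv ℝ f x v = c)
    (x : E) (t : ℝ) : f (x + t • v) = f x + t • c := by
  have hderiv : ∀ s : ℝ, HasDerivAt (fun s => f (x + s • v) - s • c) 0 s := by
    intro s
    have hline : HasDerivAt (fun s : ℝ => x + s • v) v s :=
      ((hasDerivAt_id s).smul_const v).const_add x |>.congr_deriv (one_smul ℝ v)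
    have hcomp := (hf (x + s • v)).hasFDerivAt.comp_hasDerivAt s hline
    rw [hfv] at hcomp
    simpa using hcomp.fun_sub ((hasDerivAt_id s).smul_const c)
  have hconst := is_const_of_deriv_eq_zero (fun s => (hderiv s).differentiableAt)
    (fun s => (hderiv s).deriv) t 0
  simp only [zero_smul, add_zero, sub_zero] at hconst
  rw [← hconst, sub_add_cancel]

theorem ContinuousLinearMap.apply_const_one_eq_sum_apply_single {ι : Type*} [Fintype ι]
    [DecidableEq ι] (L : (ι → ℝ) →L[ℝ] ℝ) :
    L (fun _ => 1) = ∑ i, L (Pi.single i 1) := by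
  rw [← map_sum, univ_sum_single fun _ : ι => (1 : ℝ)]

theorem cost_function_of_proper_scoring_rule_translation_general {N : ℕ}
    (C : (Fin N → ℝ) → ℝ) (hdiff : Differentiable ℝ C)
    (hgrad : ∀ q : Fin N → ℝ,
      (∀ i, 0 ≤ fderiv ℝ C q (Pi.single i 1)) ∧
        ∑ i, fderiv ℝ C q (Pi.single i 1) = 1) :
    ∀ (q : Fin N → ℝ) (d : ℝ), C (fun i => q i + d) = C q + d := by
  intro q d
  have hdir : ∀ q, fderiv ℝ C q (fun _ => 1) = 1 := fun q => by
    rw [ContinuousLinearMap.apply_const_one_eq_sum_apply_single, (hgrad q).2]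
  convert hdiff.apply_add_smul_of_fderiv_apply_eq hdir q d using 2
  · ext i; simp
  · simp

/-- The cost function of any proper scoring rule satisfies the
translation property `C(q + d·e) = C(q) + d`. -/
theorem cost_function_of_proper_scoring_rule_translation {N : ℕ} (hN : 1 ≤ N)
    (S : (Fin N → ℝ) → (Fin N → ℝ))
    (hproper : ∀ r p : Fin N → ℝ,
      ((∀ i, 0 ≤ r i) ∧ ∑ i, r i = 1) → ((∀ i, 0 ≤ p i) ∧ ∑ i, p i = 1) →
      ∑ i, r i * S p i ≤ ∑ i, r i * S r i)
    (C : (Fin N → ℝ) → ℝ) (hdiff : Differentiable ℝ C)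
    (hgrad : ∀ q : Fin N → ℝ,
      (∀ i, 0 ≤ fderiv ℝ C q (Pi.single i 1)) ∧
        ∑ i, fderiv ℝ C q (Pi.single i 1) = 1)
    (hscore : ∃ K : ℝ, ∀ (q : Fin N → ℝ) (i : Fin N),
      S (fun j => fderiv ℝ C q (Pi.single j 1)) i = q i - C q + K) :
    ∀ (q : Fin N → ℝ) (d : ℝ), C (fun i => q i + d) = C q + d :=
  cost_function_of_proper_scoring_rule_translation_general C hdiff hgrad
end

section
/- Let C : ℝ^N → ℝ satisfy the translation property C(q + d·e) = C(q) + d for all q ∈ ℝ^N and d ∈ ℝ, where e is the all-ones vector, and define the utility u(s) = −C(−s). Then for all π, x, z ∈ ℝ and all a, s, q ∈ ℝ^N satisfying the SCPM feasibility constraint x·a + s + q = z·e, the SCPM objective value satisfies π x − z + u(s) = π x − C(q + x·a). (Hence the SCPM with utility u(s) = −C(−s) accepts orders and charges exactly as the cost-function market with cost C.) -/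
/-! On the feasible set the residual position is `-s = (q + x a) - z e`, so translation
invariance of `C` gives `u s = -C (-s) = z - C (q + x a)`; the `z` cancels in the objective. -/

theorem neg_cost_neg_eq_of_feasible {ι : Type*} (C : (ι → ℝ) → ℝ)
    (htrans : ∀ (q : ι → ℝ) (d : ℝ), C (fun i => q i + d) = C q + d)
    {x z : ℝ} {a s q : ι → ℝ} (hfeas : ∀ i, x * a i + s i + q i = z) :
    -C (fun i => -s i) = z - C (fun i => q i + x * a i) := by
  have hres : (fun i => -s i) = fun i => (q i + x * a i) + (-z) := by
    funext i
    linarith [hfeas i]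
  rw [hres, htrans]
  ring

theorem scpm_objective_equals_cost_function_market_general {N : ℕ}
    (C : (Fin N → ℝ) → ℝ)
    (htrans : ∀ (q : Fin N → ℝ) (d : ℝ), C (fun i => q i + d) = C q + d)
    (u : (Fin N → ℝ) → ℝ) (hu : ∀ s : Fin N → ℝ, u s = -C (fun i => -s i)) :
    ∀ (π x z : ℝ) (a s q : Fin N → ℝ),
      (∀ i, x * a i + s i + q i = z) →
      π * x - z + u s = π * x - C (fun i => q i + x * a i) := by
  intro π x z a s q hfeas
  rw [hu, neg_cost_neg_eq_of_feasible C htrans hfeas]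
  ring

/-- If `C` satisfies the translation property and
`u(s) = −C(−s)`, then on the SCPM feasible set `x·a + s + q = z·e` the SCPM
objective equals the cost-function market value: `π x − z + u(s) = π x − C(q + x·a)`. -/
theorem scpm_objective_equals_cost_function_market {N : ℕ} (hN : 1 ≤ N)
    (C : (Fin N → ℝ) → ℝ)
    (htrans : ∀ (q : Fin N → ℝ) (d : ℝ), C (fun i => q i + d) = C q + d)
    (u : (Fin N → ℝ) → ℝ) (hu : ∀ s : Fin N → ℝ, u s = -C (fun i => -s i)) :
    ∀ (π x z : ℝ) (a s q : Fin N → ℝ),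
      (∀ i, x * a i + s i + q i = z) →
      π * x - z + u s = π * x - C (fun i => q i + x * a i) :=
  scpm_objective_equals_cost_function_market_general C htrans u hu
end

section
/- Let u : ℝ^N → ℝ and suppose for every q ∈ ℝ^N the set {t − u(t·e − q) : t ∈ ℝ} is bounded below, with C(q) = inf_t (t − u(t·e − q)). Then for each coordinate i, the supremum over q ∈ ℝ^N with q ≥ 0 (componentwise) of q_i − C(q) equals the supremum over s ∈ ℝ^N of u(s) − s_i, as an equality of suprema in the extended reals. (Consequently, the worst case loss of the SCPM market starting from 0 shares, max_i sup_{q ≥ 0} (q_i − (C(q) − C(0))), equals B + C(0) where B = max_i sup_s (u(s) − s_i).) -/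
/-!
Every price vector `s` is of the form `t • e - q` with `q ≥ 0` (take `t ≥ max_j s_j`), and
for such `s` the payoff `q_i - (t - u(t • e - q))` of a single `t` in the infimum defining
`C(q)` is exactly `u(s) - s_i`. Hence both suprema range over the same values: `q_i - C(q)`
is approached by values `u(s) - s_i`, and each `u(s) - s_i` is bounded by some `q_i - C(q)`.
-/

open Set

variable {ι : Type*}

noncomputable def scpmCost (u : (ι → ℝ) → ℝ) (q : ι → ℝ) : ℝ :=
  sInf (range fun t : ℝ => t - u (fun i => t - q i))

lemma EReal.coe_le_iSup_coe_of_forall_lt {α : Type*} {a : ℝ} {f : α → ℝ}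
    (h : ∀ x < a, ∃ s, x < f s) : (a : EReal) ≤ ⨆ s, (f s : EReal) := by
  refine le_of_forall_lt_imp_le_of_dense fun d hd => ?_
  obtain ⟨x, hdx, hxa⟩ := EReal.lt_iff_exists_real_btwn.1 hd
  obtain ⟨s, hs⟩ := h x (EReal.coe_lt_coe_iff.1 hxa)
  exact hdx.le.trans ((EReal.coe_le_coe_iff.2 hs.le).trans (le_iSup (fun s => (f s : EReal)) s))

lemma exists_lt_sub_of_lt_sub_scpmCost {u : (ι → ℝ) → ℝ} {q : ι → ℝ} {i : ι} {x : ℝ}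
    (hx : x < q i - scpmCost u q) : ∃ s : ι → ℝ, x < u s - s i := by
  obtain ⟨_, ⟨t, rfl⟩, ht⟩ :=
    exists_lt_of_csInf_lt (range_nonempty _) (show scpmCost u q < q i - x by linarith)
  exact ⟨fun j => t - q j, by linarith⟩

lemma sub_le_sub_scpmCost {u : (ι → ℝ) → ℝ} {s : ι → ℝ} {t : ℝ}
    (hbdd : BddBelow (range fun r : ℝ => r - u (fun j => r - (t - s j)))) (i : ι) :
    u s - s i ≤ (t - s i) - scpmCost u (fun j => t - s j) := by
  have hle := csInf_le hbdd ⟨t, rfl⟩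
  simp only [sub_sub_cancel] at hle
  unfold scpmCost
  linarith

theorem scpm_worst_case_loss_general {N : ℕ}
    (u : (Fin N → ℝ) → ℝ)
    (hbdd : ∀ q : Fin N → ℝ,
      BddBelow (Set.range fun t : ℝ => t - u (fun i => t - q i)))
    (C : (Fin N → ℝ) → ℝ)
    (hC : ∀ q : Fin N → ℝ,
      C q = sInf (Set.range fun t : ℝ => t - u (fun i => t - q i))) :
    ∀ i : Fin N,
      (⨆ q : {q : Fin N → ℝ // ∀ j, 0 ≤ q j}, ((q.1 i - C q.1 : ℝ) : EReal)) =
        ⨆ s : Fin N → ℝ, ((u s - s i : ℝ) : EReal) := by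
  intro i
  obtain rfl : C = scpmCost u := funext hC
  refine le_antisymm (iSup_le fun q => EReal.coe_le_iSup_coe_of_forall_lt fun x hx =>
    exists_lt_sub_of_lt_sub_scpmCost hx) (iSup_le fun s => ?_)
  set t := ⨆ j, s j
  have hq : ∀ j, 0 ≤ t - s j := fun j => sub_nonneg.2 (le_ciSup (Finite.bddAbove_range s) j)
  calc ((u s - s i : ℝ) : EReal)
      ≤ ((t - s i - scpmCost u (fun j => t - s j) : ℝ) : EReal) :=
        EReal.coe_le_coe_iff.2 (sub_le_sub_scpmCost (hbdd _) i)
    _ ≤ _ := le_iSup (fun q : {q : Fin N → ℝ // ∀ j, 0 ≤ q j} =>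
        ((q.1 i - scpmCost u q.1 : ℝ) : EReal)) ⟨_, hq⟩

/-- For the SCPM cost function `C`, for each outcome `i`,
`sup_{q ≥ 0} (q_i − C(q)) = sup_s (u(s) − s_i)` as suprema in the extended
reals. -/
theorem scpm_worst_case_loss {N : ℕ} (hN : 1 ≤ N)
    (u : (Fin N → ℝ) → ℝ)
    (hbdd : ∀ q : Fin N → ℝ,
      BddBelow (Set.range fun t : ℝ => t - u (fun i => t - q i)))
    (C : (Fin N → ℝ) → ℝ)
    (hC : ∀ q : Fin N → ℝ,
      C q = sInf (Set.range fun t : ℝ => t - u (fun i => t - q i))) :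
    ∀ i : Fin N,
      (⨆ q : {q : Fin N → ℝ // ∀ j, 0 ≤ q j}, ((q.1 i - C q.1 : ℝ) : EReal)) =
        ⨆ s : Fin N → ℝ, ((u s - s i : ℝ) : EReal) :=
  scpm_worst_case_loss_general u hbdd C hC
end

section
/- Let u : ℝ^N → ℝ and suppose for every q ∈ ℝ^N the set {t − u(t·e − q) : t ∈ ℝ} is bounded below, with C(q) = inf_t (t − u(t·e − q)). Then for every r in the simplex Δ = {r ∈ ℝ^N : r ≥ 0, Σ_i r_i = 1}, the supremum over q ∈ ℝ^N with q ≥ 0 of Σ_i r_i q_i − C(q) equals the supremum over s ∈ ℝ^N of u(s) − Σ_i r_i s_i, as an equality of suprema in the extended reals. -/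
/-!
Since `∑ i, r i = 1`, the expected profit of buying `q` at "price level" `t` is
`∑ i, r i * q i - (t - u (t • 1 - q)) = u s - ∑ i, r i * s i` with `s = t • 1 - q`. Taking the
infimum defining `C q` inside the supremum over `q ≥ 0` turns the left-hand side into a supremum
of `u s - ∑ i, r i * s i` over all `s = t • 1 - q`, and every `s` has this form: take `t` above
every coordinate of `s`.
-/

open Set

lemma EReal.coe_sub_ciInf {β : Type*} [Nonempty β] {f : β → ℝ} (hf : BddBelow (range f))
    (a : ℝ) : ((a - ⨅ t, f t : ℝ) : EReal) = ⨆ t, ((a - f t : ℝ) : EReal) :=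
  Antitone.map_ciInf_of_continuousAt (f := fun x : ℝ => ((a - x : ℝ) : EReal))
    (continuous_coe_real_ereal.comp (continuous_sub_left a)).continuousAt
    (fun _ _ h => EReal.coe_le_coe_iff.2 (sub_le_sub_left h a)) hf

lemma sum_mul_const_sub_of_sum_eq_one {ι : Type*} [Fintype ι] {r : ι → ℝ}
    (hr : ∑ i, r i = 1) (t : ℝ) (v : ι → ℝ) :
    ∑ i, r i * (t - v i) = t - ∑ i, r i * v i := by
  simp only [mul_sub, Finset.sum_sub_distrib, ← Finset.sum_mul, hr, one_mul]

lemma iSup_nonneg_iSup_const_sub_eq_iSup {ι α : Type*} [Finite ι] [CompleteLattice α]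
    (g : (ι → ℝ) → α) :
    ⨆ q : {q : ι → ℝ // ∀ j, 0 ≤ q j}, ⨆ t : ℝ, g (fun i => t - q.1 i) = ⨆ s, g s := by
  refine le_antisymm (iSup₂_le fun _ _ => le_iSup g _) (iSup_le fun s => ?_)
  obtain ⟨t, ht⟩ := Finite.bddAbove_range s
  have hq : ∀ j, 0 ≤ t - s j := fun j => sub_nonneg.2 (ht ⟨j, rfl⟩)
  refine le_iSup_of_le ⟨fun i => t - s i, hq⟩ (le_iSup_of_le t ?_)
  simp only [sub_sub_cancel, le_refl]

theorem scpm_expected_profit_sup_general {N : ℕ}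
    (u : (Fin N → ℝ) → ℝ)
    (hbdd : ∀ q : Fin N → ℝ,
      BddBelow (Set.range fun t : ℝ => t - u (fun i => t - q i)))
    (C : (Fin N → ℝ) → ℝ)
    (hC : ∀ q : Fin N → ℝ,
      C q = sInf (Set.range fun t : ℝ => t - u (fun i => t - q i))) :
    ∀ r : Fin N → ℝ, (∀ i, 0 ≤ r i) → (∑ i, r i = 1) →
      (⨆ q : {q : Fin N → ℝ // ∀ j, 0 ≤ q j},
          (((∑ i, r i * q.1 i) - C q.1 : ℝ) : EReal)) =
        ⨆ s : Fin N → ℝ, ((u s - ∑ i, r i * s i : ℝ) : EReal) := by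
  intro r _ hr
  have profit_eq_iSup : ∀ q : Fin N → ℝ, ((∑ i, r i * q i - C q : ℝ) : EReal) =
      ⨆ t : ℝ, ((u (fun i => t - q i) - ∑ i, r i * (t - q i) : ℝ) : EReal) := by
    intro q
    rw [hC, ← iInf, EReal.coe_sub_ciInf (hbdd q)]
    congr! 2 with t
    rw [sum_mul_const_sub_of_sum_eq_one hr]
    congr 1
    ring
  simp only [profit_eq_iSup]
  exact iSup_nonneg_iSup_const_sub_eq_iSup fun s => ((u s - ∑ i, r i * s i : ℝ) : EReal)

/-- For the SCPM cost function `C` and any belief `r` in the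
simplex, `sup_{q ≥ 0} (Σ_i r_i q_i − C(q)) = sup_s (u(s) − Σ_i r_i s_i)`
as suprema in the extended reals. -/
theorem scpm_expected_profit_sup {N : ℕ} (hN : 1 ≤ N)
    (u : (Fin N → ℝ) → ℝ)
    (hbdd : ∀ q : Fin N → ℝ,
      BddBelow (Set.range fun t : ℝ => t - u (fun i => t - q i)))
    (C : (Fin N → ℝ) → ℝ)
    (hC : ∀ q : Fin N → ℝ,
      C q = sInf (Set.range fun t : ℝ => t - u (fun i => t - q i))) :
    ∀ r : Fin N → ℝ, (∀ i, 0 ≤ r i) → (∑ i, r i = 1) →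
      (⨆ q : {q : Fin N → ℝ // ∀ j, 0 ≤ q j},
          (((∑ i, r i * q.1 i) - C q.1 : ℝ) : EReal)) =
        ⨆ s : Fin N → ℝ, ((u s - ∑ i, r i * s i : ℝ) : EReal) :=
  scpm_expected_profit_sup_general u hbdd C hC
end

section
/- Let b > 0 and u(s) = −b · log(Σ_{j=1}^N exp(−s_j/b)). Then for every coordinate i, 0 is the least upper bound of the set {u(s) − s_i : s ∈ ℝ^N}. (Combined with C(0) = b log N, the worst case loss of the LMSR market is b log N.) -/
/-!
Since `exp (-s i / b)` is one of the summands, `u s ≤ s i`, so `0` bounds the set from above.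
Fixing `s i = 0` and sending every other share to `+∞` kills the other summands, so the
sum tends to `1` and `u s - s i = u s` tends to `0`.
-/

open Filter Topology Real

namespace LMSR

variable {ι : Type*} [Fintype ι] {b : ℝ}

noncomputable def utility (b : ℝ) (s : ι → ℝ) : ℝ :=
  -b * log (∑ j, exp (-s j / b))

theorem utility_sub_le (hb : 0 < b) (s : ι → ℝ) (i : ι) : utility b s - s i ≤ 0 := by
  have hterm : exp (-s i / b) ≤ ∑ j, exp (-s j / b) :=
    Finset.single_le_sum (fun j _ => (exp_pos (-s j / b)).le) (Finset.mem_univ i)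
  have hlog : -s i / b ≤ log (∑ j, exp (-s j / b)) := by
    simpa only [log_exp] using log_le_log (exp_pos _) hterm
  have : -s i ≤ b * log (∑ j, exp (-s j / b)) := by rwa [div_le_iff₀' hb] at hlog
  unfold utility
  linarith

theorem tendsto_utility_update_atTop [DecidableEq ι] (hb : 0 < b) (i : ι) :
    Tendsto (fun t : ℝ => utility b (Function.update (fun _ => t) i 0)) atTop (𝓝 0) := by
  have hterm (j : ι) : Tendsto (fun t : ℝ => exp (-Function.update (fun _ => t) i 0 j / b))
      atTop (𝓝 (if j = i then 1 else 0)) := by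
    by_cases hj : j = i
    · subst hj
      simp
    · simp only [Function.update_of_ne hj, hj, if_false, neg_div]
      exact tendsto_exp_neg_atTop_nhds_zero.comp (tendsto_id.atTop_div_const hb)
  have hsum : Tendsto (fun t : ℝ => ∑ j, exp (-Function.update (fun _ => t) i 0 j / b))
      atTop (𝓝 1) := by
    simpa using tendsto_finsetSum Finset.univ fun j _ => hterm j
  simpa [utility] using ((continuousAt_log one_ne_zero).tendsto.comp hsum).const_mul (-b)

end LMSR

open LMSR in
theorem lmsr_B_is_zero_general {N : ℕ} (b : ℝ) (hb : 0 < b)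
    (u : (Fin N → ℝ) → ℝ)
    (hu : ∀ s : Fin N → ℝ, u s = -b * Real.log (∑ j, Real.exp (-(s j) / b))) :
    ∀ i : Fin N, IsLUB {y : ℝ | ∃ s : Fin N → ℝ, y = u s - s i} 0 := by
  obtain rfl : u = utility b := funext hu
  intro i
  refine isLUB_of_mem_closure ?_ ?_
  · rintro _ ⟨s, rfl⟩
    exact utility_sub_le hb s i
  · exact mem_closure_of_tendsto (tendsto_utility_update_atTop hb i)
      (Eventually.of_forall fun t => ⟨Function.update (fun _ => t) i 0, by simp⟩)

/-- For the LMSR utility `u(s) = −b log(Σ_j exp(−s_j/b))` and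
every coordinate `i`, `0` is the least upper bound of `{u(s) − s_i : s}`. -/
theorem lmsr_B_is_zero {N : ℕ} (hN : 1 ≤ N) (b : ℝ) (hb : 0 < b)
    (u : (Fin N → ℝ) → ℝ)
    (hu : ∀ s : Fin N → ℝ, u s = -b * Real.log (∑ j, Real.exp (-(s j) / b))) :
    ∀ i : Fin N, IsLUB {y : ℝ | ∃ s : Fin N → ℝ, y = u s - s i} 0 :=
  lmsr_B_is_zero_general b hb u hu
end

section
/- Let N ≥ 1, b > 0, and define the quadratic-scoring-rule utility u : ℝ^N → ℝ by u(s) = (Σ_j s_j)/N − (1/(4b)) · (Σ_j s_j² − (Σ_j s_j)²/N). Then (a) for every coordinate i, b·(1 − 1/N) is the least upper bound of {u(s) − s_i : s ∈ ℝ^N}; and (b) inf_{t ∈ ℝ} (t − u(t·e)) = 0, where e is the all-ones vector. Consequently the worst case loss of this market is b·(N−1)/N. -/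
/-!
Write `V x = ∑ xⱼ² - (∑ xⱼ)² / N` for the sum of squared deviations from the mean, so that
`u s = (∑ sⱼ) / N - V s / (4b)`. Completing the square gives, for every coordinate `i`,
`u s - sᵢ = b (1 - 1/N) - V (s + 2b eᵢ) / (4b)`. Since `V ≥ 0` with equality exactly on constant
vectors, `b (1 - 1/N)` is the maximum of `u s - sᵢ`, attained at `s = -2b eᵢ`; and `u (t e) = t`,
so `t - u (t e)` vanishes identically.
-/

open Finset

variable {ι : Type*} [Fintype ι]

noncomputable def sumSqDev (x : ι → ℝ) : ℝ :=
  ∑ j, x j ^ 2 - (∑ j, x j) ^ 2 / Fintype.card ι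

noncomputable def quadraticUtility (b : ℝ) (s : ι → ℝ) : ℝ :=
  (∑ j, s j) / Fintype.card ι - sumSqDev s / (4 * b)

theorem sumSqDev_nonneg (x : ι → ℝ) : 0 ≤ sumSqDev x := by
  have hCS := sq_sum_le_card_mul_sum_sq (s := univ) (f := x)
  rw [card_univ] at hCS
  exact sub_nonneg.2 <| div_le_of_le_mul₀ (by positivity) (by positivity) (by linarith)

theorem sumSqDev_const (t : ℝ) : sumSqDev (fun _ : ι => t) = 0 := by
  rcases eq_or_ne (Fintype.card ι : ℝ) 0 with hn | hn
  · simp [sumSqDev, hn]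
  · simp only [sumSqDev, sum_const, card_univ, nsmul_eq_mul]
    field_simp
    ring

theorem sumSqDev_zero : sumSqDev (0 : ι → ℝ) = 0 :=
  sumSqDev_const 0

theorem quadraticUtility_const [Nonempty ι] (b t : ℝ) :
    quadraticUtility b (fun _ : ι => t) = t := by
  have hn : (Fintype.card ι : ℝ) ≠ 0 := Nat.cast_ne_zero.2 Fintype.card_ne_zero
  simp only [quadraticUtility, sumSqDev_const, zero_div, sub_zero, sum_const, card_univ,
    nsmul_eq_mul]
  field_simp

variable [DecidableEq ι]

theorem sum_sq_add_single (s : ι → ℝ) (i : ι) (c : ℝ) :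
    ∑ j, (s + Pi.single i c : ι → ℝ) j ^ 2 = ∑ j, s j ^ 2 + 2 * c * s i + c ^ 2 := by
  have hpoint : ∀ j, (s + Pi.single i c : ι → ℝ) j ^ 2 =
      s j ^ 2 + (Pi.single i (2 * c * s i + c ^ 2) : ι → ℝ) j := by
    intro j
    by_cases h : j = i
    · subst h; simp only [Pi.add_apply, Pi.single_eq_same]; ring
    · simp [h]
  simp only [hpoint, sum_add_distrib, sum_pi_single', mem_univ, if_true, add_assoc]

theorem quadraticUtility_sub_apply {b : ℝ} (hb : b ≠ 0) (s : ι → ℝ) (i : ι) :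
    quadraticUtility b s - s i =
      b * (1 - 1 / Fintype.card ι) - sumSqDev (s + Pi.single i (2 * b)) / (4 * b) := by
  rw [quadraticUtility, sumSqDev, sumSqDev, sum_sq_add_single]
  simp only [Pi.add_apply, sum_add_distrib, sum_pi_single', mem_univ, if_true]
  field_simp
  ring

theorem isGreatest_quadraticUtility_sub_apply {b : ℝ} (hb : 0 < b) (i : ι) :
    IsGreatest {y | ∃ s : ι → ℝ, y = quadraticUtility b s - s i}
      (b * (1 - 1 / Fintype.card ι)) := by
  refine ⟨⟨-Pi.single i (2 * b), ?_⟩, ?_⟩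
  · rw [quadraticUtility_sub_apply hb.ne', neg_add_cancel, sumSqDev_zero, zero_div, sub_zero]
  · rintro y ⟨s, rfl⟩
    rw [quadraticUtility_sub_apply hb.ne']
    have hV := sumSqDev_nonneg (s + Pi.single i (2 * b))
    linarith [div_nonneg hV (by positivity : (0 : ℝ) ≤ 4 * b)]

/-- For the quadratic-scoring-rule utility
`u(s) = (Σ_j s_j)/N − (1/(4b))(Σ_j s_j² − (Σ_j s_j)²/N)`:
(a) for each `i`, `b(1 − 1/N)` is the least upper bound of `{u(s) − s_i : s}`;
(b) `inf_t (t − u(t·e)) = 0`. -/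
theorem quadratic_scoring_rule_worst_case_loss {N : ℕ} (hN : 1 ≤ N)
    (b : ℝ) (hb : 0 < b) (u : (Fin N → ℝ) → ℝ)
    (hu : ∀ s : Fin N → ℝ,
      u s = (∑ j, s j) / N -
        (1 / (4 * b)) * ((∑ j, (s j) ^ 2) - (∑ j, s j) ^ 2 / N)) :
    (∀ i : Fin N,
      IsLUB {y : ℝ | ∃ s : Fin N → ℝ, y = u s - s i} (b * (1 - 1 / N))) ∧
      sInf (Set.range fun t : ℝ => t - u (fun _ => t)) = 0 := by
  have hu' : u = quadraticUtility b := funext fun s => by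
    rw [hu, quadraticUtility, sumSqDev, Fintype.card_fin]
    ring
  subst hu'
  have hne : Nonempty (Fin N) := Fin.pos_iff_nonempty.1 hN
  refine ⟨fun i => by simpa using (isGreatest_quadraticUtility_sub_apply hb i).isLUB, ?_⟩
  simp [quadraticUtility_const]
end

section
/- Let l > 0, γ ∈ ℝ, and let p : ℝ → ℝ be nondecreasing on [0, l] (hence integrable on [0, l]). Define the trader's profit R(x) = γ·x − ∫_0^x p(ε) dε for x ∈ [0, l]. Suppose x* ∈ [0, l] satisfies: p(ε) ≤ γ for all ε ∈ [0, x*), and either x* = l or γ ≤ p(x*). Then R(x) ≤ R(x*) for all x ∈ [0, l]; i.e., x* maximizes the trader's profit over [0, l]. -/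
/-!
The profit is the primitive `R(x) = ∫_0^x (γ - p)`. Its integrand is nonnegative on `[0, x*)`,
so `R` does not decrease up to `x*`; past `x*` (which forces `x* < l`, hence `γ ≤ p x*`)
monotonicity of `p` makes the integrand nonpositive, so `R` does not increase after `x*`.
-/

open MeasureTheory Set

theorem MonotoneOn.intervalIntegrable_of_mem {f : ℝ → ℝ} {s t a b : ℝ}
    (hf : MonotoneOn f (Icc s t)) (ha : a ∈ Icc s t) (hb : b ∈ Icc s t) :
    IntervalIntegrable f volume a b :=
  (hf.mono (uIcc_subset_Icc ha hb)).intervalIntegrable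

namespace intervalIntegral

variable {g : ℝ → ℝ} {μ : Measure ℝ}

theorem integral_nonneg_of_nonneg_Ico [NullSingletonClass μ] {a b : ℝ} (hab : a ≤ b)
    (hg : ∀ t ∈ Ico a b, 0 ≤ g t) : 0 ≤ ∫ t in a..b, g t ∂μ := by
  rw [integral_of_le hab, integral_Ioc_eq_integral_Ioo]
  exact setIntegral_nonneg measurableSet_Ioo fun t ht => hg t ⟨ht.1.le, ht.2⟩

theorem integral_le_integral_of_nonneg_Ico [NullSingletonClass μ] {a x c : ℝ} (hxc : x ≤ c)
    (hgax : IntervalIntegrable g μ a x) (hgxc : IntervalIntegrable g μ x c)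
    (hg : ∀ t ∈ Ico x c, 0 ≤ g t) : ∫ t in a..x, g t ∂μ ≤ ∫ t in a..c, g t ∂μ := by
  rw [← integral_add_adjacent_intervals hgax hgxc]
  linarith [integral_nonneg_of_nonneg_Ico (μ := μ) hxc hg]

theorem integral_le_integral_of_nonpos_Icc [IsLocallyFiniteMeasure μ] {a c x : ℝ} (hcx : c ≤ x)
    (hgac : IntervalIntegrable g μ a c) (hgcx : IntervalIntegrable g μ c x)
    (hg : ∀ t ∈ Icc c x, g t ≤ 0) : ∫ t in a..x, g t ∂μ ≤ ∫ t in a..c, g t ∂μ := by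
  have hnonpos : ∫ t in c..x, g t ∂μ ≤ 0 := by
    simpa using integral_mono_on hcx hgcx intervalIntegrable_const hg
  rw [← integral_add_adjacent_intervals hgac hgcx]
  linarith

theorem mul_sub_integral_eq_integral_sub {p : ℝ → ℝ} {x : ℝ} (γ : ℝ)
    (hp : IntervalIntegrable p volume 0 x) :
    γ * x - ∫ ε in (0 : ℝ)..x, p ε = ∫ ε in (0 : ℝ)..x, (γ - p ε) := by
  rw [integral_sub intervalIntegrable_const hp, integral_const, smul_eq_mul, sub_zero, mul_comm]

end intervalIntegral

open intervalIntegral in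
theorem truthful_bidding_optimal_general (l γ : ℝ) (p : ℝ → ℝ)
    (hmono : MonotoneOn p (Set.Icc 0 l))
    (xstar : ℝ) (hx : xstar ∈ Set.Icc 0 l)
    (hbelow : ∀ ε ∈ Set.Ico 0 xstar, p ε ≤ γ)
    (hstop : xstar = l ∨ γ ≤ p xstar) :
    ∀ x ∈ Set.Icc 0 l,
      γ * x - ∫ ε in (0 : ℝ)..x, p ε ≤
        γ * xstar - ∫ ε in (0 : ℝ)..xstar, p ε := by
  intro x hxl
  have h0 : (0 : ℝ) ∈ Icc 0 l := ⟨le_rfl, hx.1.trans hx.2⟩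
  have hint : ∀ a ∈ Icc 0 l, ∀ b ∈ Icc 0 l, IntervalIntegrable (fun ε => γ - p ε) volume a b :=
    fun a ha b hb => intervalIntegrable_const.sub (hmono.intervalIntegrable_of_mem ha hb)
  rw [mul_sub_integral_eq_integral_sub γ (hmono.intervalIntegrable_of_mem h0 hxl),
    mul_sub_integral_eq_integral_sub γ (hmono.intervalIntegrable_of_mem h0 hx)]
  rcases le_or_gt x xstar with hle | hlt
  · exact integral_le_integral_of_nonneg_Ico hle (hint 0 h0 x hxl) (hint x hxl xstar hx)
      fun t ht => sub_nonneg.2 (hbelow t ⟨hxl.1.trans ht.1, ht.2⟩)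
  · have hγ : γ ≤ p xstar := hstop.resolve_left (hlt.trans_le hxl.2).ne
    exact integral_le_integral_of_nonpos_Icc hlt.le (hint 0 h0 xstar hx) (hint xstar hx x hxl)
      fun t ht => sub_nonpos.2
        (hγ.trans (hmono hx ⟨hx.1.trans ht.1, ht.2.trans hxl.2⟩ ht.1))

open intervalIntegral in
/-- With a nondecreasing instantaneous price function `p` on
`[0, l]` and trader profit `R(x) = γ x − ∫_0^x p(ε) dε`, any point `x*` where
the price stays below `γ` up to `x*` and either `x* = l` or `γ ≤ p(x*)`,
maximizes the trader's profit over `[0, l]`. -/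
theorem truthful_bidding_optimal (l γ : ℝ) (hl : 0 < l) (p : ℝ → ℝ)
    (hmono : MonotoneOn p (Set.Icc 0 l))
    (xstar : ℝ) (hx : xstar ∈ Set.Icc 0 l)
    (hbelow : ∀ ε ∈ Set.Ico 0 xstar, p ε ≤ γ)
    (hstop : xstar = l ∨ γ ≤ p xstar) :
    ∀ x ∈ Set.Icc 0 l,
      γ * x - ∫ ε in (0 : ℝ)..x, p ε ≤
        γ * xstar - ∫ ε in (0 : ℝ)..xstar, p ε :=
  truthful_bidding_optimal_general l γ p hmono xstar hx hbelow hstop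
end

section
/- Let u : ℝ^N → ℝ be concave and differentiable, let q, a ∈ ℝ^N, let e ∈ ℝ^N be the all-ones vector, and let x_1 < x_2 and z_1, z_2 ∈ ℝ. Set s_1 = z_1·e − q − x_1·a and s_2 = z_2·e − q − x_2·a, and suppose ∇u(s_1)·e = 1 and ∇u(s_2)·e = 1. Then ∇u(s_1)·a ≤ ∇u(s_2)·a; i.e., the instantaneous price of an order in the SCPM is non-decreasing in the accepted quantity. -/
/-!
Along the segment from `s₂` to `s₁` the utility is a concave function of one variable, so its
derivative `∇u(s)·(s₁ - s₂)` is larger at `s₂` than at `s₁`. Since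
`s₁ - s₂ = (z₁ - z₂)·e + (x₂ - x₁)·a` and both gradients take the value `1` on `e`, this says
`(x₂ - x₁) ∇u(s₁)·a ≤ (x₂ - x₁) ∇u(s₂)·a`.
-/

open AffineMap in
theorem ConcaveOn.hasFDerivAt_apply_sub_le {E : Type*} [NormedAddCommGroup E] [NormedSpace ℝ E]
    {s : Set E} {u : E → ℝ} {x y : E} {f' g' : E →L[ℝ] ℝ} (hu : ConcaveOn ℝ s u)
    (hx : x ∈ s) (hy : y ∈ s) (hf' : HasFDerivAt u f' x) (hg' : HasFDerivAt u g' y) :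
    g' (y - x) ≤ f' (y - x) := by
  have hconc : ConcaveOn ℝ (lineMap x y ⁻¹' s) (u ∘ lineMap x y) := hu.comp_affineMap _
  have h0 : (0 : ℝ) ∈ lineMap x y ⁻¹' s := by simpa using hx
  have h1 : (1 : ℝ) ∈ lineMap x y ⁻¹' s := by simpa using hy
  have hderiv {t : ℝ} {φ : E →L[ℝ] ℝ} (h : HasFDerivAt u φ (lineMap x y t)) :
      HasDerivAt (u ∘ lineMap x y) (φ (y - x)) t :=
    h.comp_hasDerivAt t hasDerivAt_lineMap
  calc g' (y - x) ≤ slope (u ∘ lineMap x y) 0 1 :=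
        hconc.le_slope_of_hasDerivAt h0 h1 one_pos (hderiv (by simpa using hg'))
    _ ≤ f' (y - x) :=
        hconc.slope_le_of_hasDerivAt h0 h1 one_pos (hderiv (by simpa using hf'))

theorem scpm_instantaneous_price_nondecreasing_general {N : ℕ}
    (u : (Fin N → ℝ) → ℝ) (hu : ConcaveOn ℝ Set.univ u)
    (hdiff : Differentiable ℝ u)
    (q a : Fin N → ℝ) (x₁ x₂ z₁ z₂ : ℝ) (hx : x₁ < x₂)
    (s₁ s₂ : Fin N → ℝ)
    (hs₁ : s₁ = fun i => z₁ - q i - x₁ * a i)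
    (hs₂ : s₂ = fun i => z₂ - q i - x₂ * a i)
    (hfoc₁ : fderiv ℝ u s₁ (fun _ => 1) = 1)
    (hfoc₂ : fderiv ℝ u s₂ (fun _ => 1) = 1) :
    fderiv ℝ u s₁ a ≤ fderiv ℝ u s₂ a := by
  have hdir : s₁ - s₂ = (z₁ - z₂) • (fun _ => (1 : ℝ)) + (x₂ - x₁) • a := by
    funext i
    simp only [hs₁, hs₂, Pi.sub_apply, Pi.add_apply, Pi.smul_apply, smul_eq_mul]
    ring
  have key := hu.hasFDerivAt_apply_sub_le trivial trivial
    (hdiff s₂).hasFDerivAt (hdiff s₁).hasFDerivAt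
  rw [hdir, map_add, map_add, map_smul, map_smul, map_smul, map_smul, hfoc₁, hfoc₂] at key
  simp only [smul_eq_mul, mul_one, add_le_add_iff_left] at key
  exact le_of_mul_le_mul_left key (sub_pos.mpr hx)

/-- For a concave differentiable utility `u`, if
`s₁ = z₁·e − q − x₁·a` and `s₂ = z₂·e − q − x₂·a` with `x₁ < x₂` both satisfy
the first-order condition `∇u(s)·e = 1`, then the instantaneous price
`∇u(s)·a` is non-decreasing in the accepted quantity:
`∇u(s₁)·a ≤ ∇u(s₂)·a`. -/
theorem scpm_instantaneous_price_nondecreasing {N : ℕ} (hN : 1 ≤ N)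
    (u : (Fin N → ℝ) → ℝ) (hu : ConcaveOn ℝ Set.univ u)
    (hdiff : Differentiable ℝ u)
    (q a : Fin N → ℝ) (x₁ x₂ z₁ z₂ : ℝ) (hx : x₁ < x₂)
    (s₁ s₂ : Fin N → ℝ)
    (hs₁ : s₁ = fun i => z₁ - q i - x₁ * a i)
    (hs₂ : s₂ = fun i => z₂ - q i - x₂ * a i)
    (hfoc₁ : fderiv ℝ u s₁ (fun _ => 1) = 1)
    (hfoc₂ : fderiv ℝ u s₂ (fun _ => 1) = 1) :
    fderiv ℝ u s₁ a ≤ fderiv ℝ u s₂ a :=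
  scpm_instantaneous_price_nondecreasing_general u hu hdiff q a x₁ x₂ z₁ z₂ hx s₁ s₂ hs₁ hs₂ hfoc₁
    hfoc₂
end

section
/- Let u : ℝ^N → ℝ, let e ∈ ℝ^N be the all-ones vector, and fix c, π, x ∈ ℝ and q, a ∈ ℝ^N. Define Z^x ∈ ℝ^N by Z^x_i = c − q_i + π x − a_i x, and suppose the set {t − u(Z^x + t·e) : t ∈ ℝ} is bounded below, with ρ(Z^x) = inf_t (t − u(Z^x + t·e)). Then −ρ(Z^x) − c is the least upper bound of the set {π x − z + u(z·e − x·a − q) : z ∈ ℝ}; i.e., the SCPM objective at accepted quantity x equals −ρ(Z^x) − c, so maximizing the SCPM objective over 0 ≤ x ≤ l is equivalent to minimizing the risk ρ(Z^x). -/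
/-! Substituting `z = t + π x + c` turns the objective into `-(t - u (Zx + t e)) - c`, so the set
of objective values is the image of the set defining `ρ(Zx)` under the antitone map
`r ↦ -r - c`, which carries its infimum to the supremum. -/

open Set

theorem IsGLB.isLUB_range_neg_sub {G ι : Type*} [AddCommGroup G] [PartialOrder G]
    [IsOrderedAddMonoid G] {f : ι → G} {m : G} (h : IsGLB (range f) m) (c : G) :
    IsLUB (range fun i => -f i - c) (-m - c) := by
  have hneg : IsLUB (range fun i => -f i) (-m) := by
    rw [← neg_range]; exact h.neg
  have hsub := (OrderIso.subRight c).isLUB_image'.mpr hneg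
  rwa [← range_comp] at hsub

theorem scpm_objective_eq_neg_risk_general {N : ℕ}
    (u : (Fin N → ℝ) → ℝ) (c π x : ℝ) (q a : Fin N → ℝ)
    (Zx : Fin N → ℝ) (hZ : ∀ i, Zx i = c - q i + π * x - a i * x)
    (hbdd : BddBelow (Set.range fun t : ℝ => t - u (fun i => Zx i + t)))
    (ρZx : ℝ)
    (hρ : ρZx = sInf (Set.range fun t : ℝ => t - u (fun i => Zx i + t))) :
    IsLUB {y : ℝ | ∃ z : ℝ,
        y = π * x - z + u (fun i => z - x * a i - q i)}
      (-ρZx - c) := by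
  set objective : ℝ → ℝ := fun z => π * x - z + u (fun i => z - x * a i - q i)
  have hshift : objective ∘ (· + (π * x + c)) = fun t => -(t - u (fun i => Zx i + t)) - c := by
    funext t
    have hpayoff : (fun i => t + (π * x + c) - x * a i - q i) = fun i => Zx i + t := by
      funext i; rw [hZ i]; ring
    simp only [objective, Function.comp_apply, hpayoff]
    ring
  have hset : {y : ℝ | ∃ z : ℝ, y = objective z} = range objective := by
    ext y; simp only [mem_ofPred_eq, mem_range, eq_comm]
  rw [hset, ← (Equiv.addRight (π * x + c)).surjective.range_comp, hρ]
  exact hshift ▸ (isGLB_csInf (range_nonempty _) hbdd).isLUB_range_neg_sub c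

/-- With market-maker revenue `Z^x_i = c − q_i + π x − a_i x`
and risk measure `ρ(Z) = inf_t (t − u(Z + t·e))`, the SCPM objective at
accepted quantity `x` equals `−ρ(Z^x) − c`: it is the least upper bound of
`{π x − z + u(z·e − x·a − q) : z ∈ ℝ}`. -/
theorem scpm_objective_eq_neg_risk {N : ℕ} (hN : 1 ≤ N)
    (u : (Fin N → ℝ) → ℝ) (c π x : ℝ) (q a : Fin N → ℝ)
    (Zx : Fin N → ℝ) (hZ : ∀ i, Zx i = c - q i + π * x - a i * x)
    (hbdd : BddBelow (Set.range fun t : ℝ => t - u (fun i => Zx i + t)))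
    (ρZx : ℝ)
    (hρ : ρZx = sInf (Set.range fun t : ℝ => t - u (fun i => Zx i + t))) :
    IsLUB {y : ℝ | ∃ z : ℝ,
        y = π * x - z + u (fun i => z - x * a i - q i)}
      (-ρZx - c) :=
  scpm_objective_eq_neg_risk_general u c π x q a Zx hZ hbdd ρZx hρ
end

section
/- Let b > 0 and θ ∈ ℝ^N with θ_i > 0 for all i, set α = Σ_i θ_i, and define u(s) = −b · log(Σ_i θ_i · exp(−s_i/b)). Then for every p in the simplex with p_i > 0 for all i, the supremum over s ∈ ℝ^N of u(s) − Σ_i p_i s_i equals b · Σ_i p_i · log(α · p_i / θ_i) − b · log α, i.e. b·KL(p ‖ θ/α) − b·log α. In particular, for θ = e (so α = N) the penalty function of the LMSR is L(p) = b · Σ_i p_i log(N p_i), the Kullback–Leibler divergence of p from the uniform distribution scaled by b. -/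
/-!
The penalty is the convex conjugate of log-sum-exp. For any `s`, put `q i = θ i * exp (-s i / b)`;
Jensen's inequality for the concave `log`, with weights `p`, gives
`∑ p i * log (q i / p i) ≤ log (∑ q i)`, which unfolds to `u s - ∑ p i * s i ≤ b * KL(p ‖ θ)`.
The bound is attained at `s i = b * log (θ i / p i)`, where `q = p`.
-/

open Real Finset

section

variable {ι : Type*} [Fintype ι] {b α : ℝ} {θ p : ι → ℝ}

theorem sum_mul_log_div_le_log_sum {q : ι → ℝ} (hp : ∀ i, 0 < p i) (hp1 : ∑ i, p i = 1)
    (hq : ∀ i, 0 < q i) : ∑ i, p i * log (q i / p i) ≤ log (∑ i, q i) := by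
  have jensen := strictConcaveOn_log_Ioi.concaveOn.le_map_sum (t := univ) (w := p)
    (p := fun i => q i / p i) (fun i _ => (hp i).le) hp1 fun i _ => div_pos (hq i) (hp i)
  simpa only [smul_eq_mul, mul_div_cancel₀ _ (hp _).ne'] using jensen

noncomputable def lmsrUtility (b : ℝ) (θ s : ι → ℝ) : ℝ :=
  -b * log (∑ i, θ i * exp (-(s i) / b))

theorem lmsrUtility_sub_le (hb : 0 < b) (hθ : ∀ i, 0 < θ i) (hp : ∀ i, 0 < p i)
    (hp1 : ∑ i, p i = 1) (s : ι → ℝ) :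
    lmsrUtility b θ s - ∑ i, p i * s i ≤ b * ∑ i, p i * log (p i / θ i) := by
  have gibbs := sum_mul_log_div_le_log_sum hp hp1 fun i => mul_pos (hθ i) (exp_pos (-(s i) / b))
  have hlog : ∀ i, p i * log (θ i * exp (-(s i) / b) / p i)
      = -(p i * s i) / b - p i * log (p i / θ i) := fun i => by
    rw [log_div (mul_pos (hθ i) (exp_pos _)).ne' (hp i).ne', log_mul (hθ i).ne' (exp_pos _).ne',
      log_exp, log_div (hp i).ne' (hθ i).ne']
    ring
  simp only [hlog, sum_sub_distrib, ← sum_div, sum_neg_distrib] at gibbs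
  have hscaled := mul_le_mul_of_nonneg_left gibbs hb.le
  rw [mul_sub, mul_div_cancel₀ _ hb.ne'] at hscaled
  unfold lmsrUtility
  linarith

theorem lmsrUtility_sub_log_div (hb : 0 < b) (hθ : ∀ i, 0 < θ i) (hp : ∀ i, 0 < p i)
    (hp1 : ∑ i, p i = 1) :
    lmsrUtility b θ (fun i => b * log (θ i / p i)) - ∑ i, p i * (b * log (θ i / p i))
      = b * ∑ i, p i * log (p i / θ i) := by
  have hq : ∀ i, θ i * exp (-(b * log (θ i / p i)) / b) = p i := fun i => by
    rw [neg_div, mul_div_cancel_left₀ _ hb.ne', ← log_inv, inv_div,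
      exp_log (div_pos (hp i) (hθ i)), mul_div_cancel₀ _ (hθ i).ne']
  have hterm : ∀ i, p i * (b * log (θ i / p i)) = -(b * (p i * log (p i / θ i))) := fun i => by
    rw [← inv_div, log_inv]
    ring
  simp only [lmsrUtility, hq, hp1, log_one, mul_zero, hterm, sum_neg_distrib, ← mul_sum]
  ring

theorem isGreatest_lmsrUtility_sub (hb : 0 < b) (hθ : ∀ i, 0 < θ i) (hp : ∀ i, 0 < p i)
    (hp1 : ∑ i, p i = 1) :
    IsGreatest {y | ∃ s : ι → ℝ, y = lmsrUtility b θ s - ∑ i, p i * s i}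
      (b * ∑ i, p i * log (p i / θ i)) :=
  ⟨⟨_, (lmsrUtility_sub_log_div hb hθ hp hp1).symm⟩,
    by rintro _ ⟨s, rfl⟩; exact lmsrUtility_sub_le hb hθ hp hp1 s⟩

theorem sum_mul_log_mul_div (hα : 0 < α)
    (hp : ∀ i, 0 < p i) (hθ : ∀ i, 0 < θ i) (hp1 : ∑ i, p i = 1) :
    ∑ i, p i * log (α * p i / θ i) = log α + ∑ i, p i * log (p i / θ i) := by
  have hterm : ∀ i, p i * log (α * p i / θ i) = p i * log α + p i * log (p i / θ i) := fun i => by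
    rw [mul_div_assoc, log_mul hα.ne' (div_pos (hp i) (hθ i)).ne', mul_add]
  rw [sum_congr rfl fun i _ => hterm i, sum_add_distrib, ← sum_mul, hp1, one_mul]

end

theorem lmsr_penalty_is_KL_general {N : ℕ} (b : ℝ) (hb : 0 < b)
    (θ : Fin N → ℝ) (hθ : ∀ i, 0 < θ i) (α : ℝ) (hα : α = ∑ i, θ i)
    (u : (Fin N → ℝ) → ℝ)
    (hu : ∀ s : Fin N → ℝ,
      u s = -b * Real.log (∑ i, θ i * Real.exp (-(s i) / b))) :
    ∀ p : Fin N → ℝ, (∀ i, 0 < p i) → (∑ i, p i = 1) →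
      IsLUB {y : ℝ | ∃ s : Fin N → ℝ, y = u s - ∑ i, p i * s i}
        (b * (∑ i, p i * Real.log (α * p i / θ i)) - b * Real.log α) := by
  intro p hp hp1
  obtain rfl : u = lmsrUtility b θ := funext hu
  have hne : Nonempty (Fin N) := by
    by_contra hempty
    simp [not_nonempty_iff.mp hempty] at hp1
  have hα0 : 0 < α := hα ▸ sum_pos (fun i _ => hθ i) univ_nonempty
  rw [sum_mul_log_mul_div hα0 hp hθ hp1, mul_add, add_sub_cancel_left]
  exact (isGreatest_lmsrUtility_sub hb hθ hp hp1).isLUB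

/-- For the generalized LMSR utility
`u(s) = −b log(Σ_i θ_i exp(−s_i/b))` with `α = Σ_i θ_i`, the penalty function
at any interior simplex point `p` is
`sup_s (u(s) − Σ_i p_i s_i) = b Σ_i p_i log(α p_i / θ_i) − b log α`,
i.e. `b·KL(p ‖ θ/α) − b log α`. -/
theorem lmsr_penalty_is_KL {N : ℕ} (hN : 1 ≤ N) (b : ℝ) (hb : 0 < b)
    (θ : Fin N → ℝ) (hθ : ∀ i, 0 < θ i) (α : ℝ) (hα : α = ∑ i, θ i)
    (u : (Fin N → ℝ) → ℝ)
    (hu : ∀ s : Fin N → ℝ,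
      u s = -b * Real.log (∑ i, θ i * Real.exp (-(s i) / b))) :
    ∀ p : Fin N → ℝ, (∀ i, 0 < p i) → (∑ i, p i = 1) →
      IsLUB {y : ℝ | ∃ s : Fin N → ℝ, y = u s - ∑ i, p i * s i}
        (b * (∑ i, p i * Real.log (α * p i / θ i)) - b * Real.log α) :=
  lmsr_penalty_is_KL_general b hb θ hθ α hα u hu
end

section
/- Let θ ∈ ℝ^N with θ_i > 0 for all i, and define the Log-SCPM utility u(s) = Σ_i θ_i · log(s_i) on the positive orthant. Then for every p ∈ ℝ^N with p_i > 0 for all i, the supremum over s with s_i > 0 of Σ_i θ_i log(s_i) − Σ_i p_i s_i equals Σ_i (θ_i · log(θ_i / p_i) − θ_i); i.e., the penalty function of the Log-SCPM is, up to an additive constant, the negative log-likelihood −log(Π_i p_i^{θ_i}) of p under observation counts θ. -/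
open Real Finset

/-- Equality holds at `x = a / b`. -/
theorem mul_log_sub_mul_le {a b x : ℝ} (ha : 0 < a) (hb : 0 < b) (hx : 0 < x) :
    a * log x - b * x ≤ a * log (a / b) - a := by
  have hlog : log (b * x / a) ≤ b * x / a - 1 := log_le_sub_one_of_pos (by positivity)
  have hsplit : log (b * x / a) = log x - log (a / b) := by
    rw [log_div (by positivity) ha.ne', log_mul hb.ne' hx.ne', log_div ha.ne' hb.ne']
    ring
  have hscaled : a * (b * x / a - 1) = b * x - a := by field_simp
  rw [hsplit] at hlog
  nlinarith [mul_le_mul_of_nonneg_left hlog ha.le]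

theorem isGreatest_sum_mul_log_sub_sum_mul {ι : Type*} [Fintype ι] {θ p : ι → ℝ}
    (hθ : ∀ i, 0 < θ i) (hp : ∀ i, 0 < p i) :
    IsGreatest {y : ℝ | ∃ s : ι → ℝ, (∀ j, 0 < s j) ∧
        y = (∑ i, θ i * log (s i)) - ∑ i, p i * s i}
      (∑ i, (θ i * log (θ i / p i) - θ i)) := by
  constructor
  · refine ⟨fun i => θ i / p i, fun i => div_pos (hθ i) (hp i), ?_⟩
    simp only [mul_div_cancel₀ _ (hp _).ne', sum_sub_distrib]
  · rintro y ⟨s, hs, rfl⟩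
    rw [← sum_sub_distrib]
    exact sum_le_sum fun i _ => mul_log_sub_mul_le (hθ i) (hp i) (hs i)

theorem log_scpm_penalty_is_log_likelihood_general {N : ℕ}
    (θ : Fin N → ℝ) (hθ : ∀ i, 0 < θ i) :
    ∀ p : Fin N → ℝ, (∀ i, 0 < p i) →
      IsLUB {y : ℝ | ∃ s : Fin N → ℝ, (∀ j, 0 < s j) ∧
          y = (∑ i, θ i * Real.log (s i)) - ∑ i, p i * s i}
        (∑ i, (θ i * Real.log (θ i / p i) - θ i)) :=
  fun _ hp => (isGreatest_sum_mul_log_sub_sum_mul hθ hp).isLUB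

/-- For the Log-SCPM utility `u(s) = Σ_i θ_i log(s_i)` on the
positive orthant, the penalty function at any strictly positive `p` is
`sup_{s > 0} (Σ_i θ_i log(s_i) − Σ_i p_i s_i) = Σ_i (θ_i log(θ_i/p_i) − θ_i)`. -/
theorem log_scpm_penalty_is_log_likelihood {N : ℕ} (hN : 1 ≤ N)
    (θ : Fin N → ℝ) (hθ : ∀ i, 0 < θ i) :
    ∀ p : Fin N → ℝ, (∀ i, 0 < p i) →
      IsLUB {y : ℝ | ∃ s : Fin N → ℝ, (∀ j, 0 < s j) ∧
          y = (∑ i, θ i * Real.log (s i)) - ∑ i, p i * s i}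
        (∑ i, (θ i * Real.log (θ i / p i) - θ i)) :=
  log_scpm_penalty_is_log_likelihood_general θ hθ
end

section
/- Let N ≥ 1, b > 0, and define the Exponential-SCPM utility u : ℝ^N → ℝ by u(s) = b · (1 − (1/N) · Σ_i exp(−s_i/b)). Then for every q ∈ ℝ^N, inf_{t ∈ ℝ} (t − u(t·e − q)) = b · log((1/N) · Σ_i exp(q_i/b)), where e is the all-ones vector. In particular C(0) = 0, and the worst case loss of the Exponential-SCPM market is b · log N. -/
open Real Set Finset

/-!
With `A` the mean of the `exp (q i / b)`, one has
`t - u (t • e - q) = t - b + b * A * exp (-t / b)`, and the tangent-line bound `x + 1 ≤ exp x`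
at `x = log A - t / b` shows that this is at least `b * log A`, with equality at `t = b * log A`.
The same bound with `A = 1 / N` gives `u s - s i ≤ b * log N`; this supremum is approached by
`s i = -b * log N` and the other coordinates tending to `+∞`, which makes their exponential
terms vanish.
-/

section TangentBound

variable {b A : ℝ}

theorem mul_log_le_sub_add_mul_exp (hb : 0 < b) (hA : 0 < A) (t : ℝ) :
    b * log A ≤ t - b + b * A * exp (-t / b) := by
  have hexp : log A + -t / b + 1 ≤ A * exp (-t / b) := by
    simpa only [exp_add, exp_log hA] using add_one_le_exp (log A + -t / b)
  calc b * log A = b * (log A + -t / b + 1) + t - b := by field_simp; ring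
    _ ≤ b * (A * exp (-t / b)) + t - b := by gcongr
    _ = t - b + b * A * exp (-t / b) := by ring

theorem isLeast_range_sub_add_mul_exp (hb : 0 < b) (hA : 0 < A) :
    IsLeast (range fun t => t - b + b * A * exp (-t / b)) (b * log A) := by
  refine ⟨⟨b * log A, ?_⟩, forall_mem_range.2 (mul_log_le_sub_add_mul_exp hb hA)⟩
  beta_reduce
  rw [neg_div, mul_div_cancel_left₀ _ hb.ne', exp_neg, exp_log hA]
  field_simp
  ring

end TangentBound

section ExpUtility

variable {ι : Type*} [Fintype ι] {b : ℝ}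

noncomputable def expUtility (b : ℝ) (s : ι → ℝ) : ℝ :=
  b * (1 - (1 / Fintype.card ι) * ∑ i, exp (-s i / b))

theorem expUtility_const_sub (b t : ℝ) (q : ι → ℝ) :
    expUtility b (fun i => t - q i) =
      b - b * ((1 / Fintype.card ι) * ∑ i, exp (q i / b)) * exp (-t / b) := by
  have hsplit (i : ι) : exp (-(t - q i) / b) = exp (-t / b) * exp (q i / b) := by
    rw [← exp_add]; ring_nf
  simp only [expUtility, hsplit, ← mul_sum]
  ring

theorem sInf_range_sub_expUtility_const_sub [Nonempty ι] (hb : 0 < b) (q : ι → ℝ) :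
    sInf (range fun t => t - expUtility b (fun i => t - q i)) =
      b * log ((1 / Fintype.card ι) * ∑ i, exp (q i / b)) := by
  have hA : 0 < (1 / Fintype.card ι : ℝ) * ∑ i, exp (q i / b) := by positivity
  have hcost : (fun t => t - expUtility b (fun i => t - q i)) =
      fun t => t - b + b * ((1 / Fintype.card ι) * ∑ i, exp (q i / b)) * exp (-t / b) :=
    funext fun t => by rw [expUtility_const_sub]; ring
  rw [hcost]
  exact (isLeast_range_sub_add_mul_exp hb hA).csInf_eq

theorem expUtility_sub_le (hb : 0 < b) (s : ι → ℝ) (i : ι) :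
    expUtility b s - s i ≤ b * log (Fintype.card ι) := by
  have hN : (0 : ℝ) < Fintype.card ι := Nat.cast_pos.2 (Fintype.card_pos_iff.2 ⟨i⟩)
  have htangent := mul_log_le_sub_add_mul_exp hb (inv_pos.2 hN) (s i)
  have hsingle : b * (1 / Fintype.card ι) * exp (-s i / b) ≤
      b * (1 / Fintype.card ι) * ∑ j, exp (-s j / b) := by
    gcongr
    exact single_le_sum (f := fun j => exp (-s j / b)) (fun j _ => (exp_pos _).le)
      (Finset.mem_univ i)
  rw [log_inv] at htangent
  rw [expUtility]
  simp only [one_div] at hsingle ⊢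
  linarith

theorem exists_lt_expUtility_sub (hb : 0 < b) (i : ι) {c : ℝ}
    (hc : c < b * log (Fintype.card ι)) : ∃ s : ι → ℝ, c < expUtility b s - s i := by
  classical
  have hN : (0 : ℝ) < Fintype.card ι := Nat.cast_pos.2 (Fintype.card_pos_iff.2 ⟨i⟩)
  set δ := (b * log (Fintype.card ι) - c) / (2 * b) with hδ
  have hδpos : 0 < δ := div_pos (by linarith) (by positivity)
  set s : ι → ℝ := fun j => -b * log (if j = i then (Fintype.card ι : ℝ) else δ)
  have hexp (j : ι) : exp (-s j / b) = if j = i then (Fintype.card ι : ℝ) else δ := by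
    simp only [s, neg_mul, neg_neg]
    rw [mul_div_cancel_left₀ _ hb.ne', exp_log (by split_ifs <;> positivity)]
  have hsum : ∑ j, exp (-s j / b) ≤ Fintype.card ι + Fintype.card ι * δ := by
    calc ∑ j, exp (-s j / b)
        ≤ ∑ j, ((if j = i then (Fintype.card ι : ℝ) else 0) + δ) := by
          gcongr with j
          rw [hexp]
          split_ifs <;> linarith
      _ = Fintype.card ι + Fintype.card ι * δ := by
          rw [sum_add_distrib, sum_ite_eq', if_pos (Finset.mem_univ i), sum_const,
            Finset.card_univ, nsmul_eq_mul]
  have hsi : s i = -b * log (Fintype.card ι) := by simp [s]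
  have hscaled : b * (1 / Fintype.card ι) * ∑ j, exp (-s j / b) ≤ b + b * δ := by
    calc b * (1 / Fintype.card ι) * ∑ j, exp (-s j / b)
        ≤ b * (1 / Fintype.card ι) * (Fintype.card ι + Fintype.card ι * δ) := by gcongr
      _ = b + b * δ := by field_simp
  have hbδ : b * δ = (b * log (Fintype.card ι) - c) / 2 := by rw [hδ]; field_simp
  refine ⟨s, ?_⟩
  rw [expUtility, hsi]
  linarith

theorem isLUB_expUtility_sub (hb : 0 < b) (i : ι) :
    IsLUB {y | ∃ s : ι → ℝ, y = expUtility b s - s i} (b * log (Fintype.card ι)) := by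
  refine ⟨fun y ⟨s, hy⟩ => hy ▸ expUtility_sub_le hb s i,
    fun c hc => le_of_forall_lt fun d hd => ?_⟩
  obtain ⟨s, hs⟩ := exists_lt_expUtility_sub hb i hd
  exact hs.trans_le (hc ⟨s, rfl⟩)

end ExpUtility

/-- For the Exponential-SCPM utility
`u(s) = b(1 − (1/N) Σ_i exp(−s_i/b))`, the SCPM cost function is
`C(q) = b log((1/N) Σ_i exp(q_i/b))`. In particular `C(0) = 0`, and
`B = max_i sup_s (u(s) − s_i) = b log N`, so the worst case loss is `b log N`. -/
theorem exponential_scpm_cost_function {N : ℕ} (hN : 1 ≤ N)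
    (b : ℝ) (hb : 0 < b) (u : (Fin N → ℝ) → ℝ)
    (hu : ∀ s : Fin N → ℝ,
      u s = b * (1 - (1 / N) * ∑ i, Real.exp (-(s i) / b))) :
    (∀ q : Fin N → ℝ,
      sInf (Set.range fun t : ℝ => t - u (fun i => t - q i)) =
        b * Real.log ((1 / N) * ∑ i, Real.exp (q i / b))) ∧
      sInf (Set.range fun t : ℝ => t - u (fun i => t - (0 : Fin N → ℝ) i)) = 0 ∧
      (∀ i : Fin N,
        IsLUB {y : ℝ | ∃ s : Fin N → ℝ, y = u s - s i} (b * Real.log N)) := by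
  have : Nonempty (Fin N) := ⟨⟨0, hN⟩⟩
  obtain rfl : u = expUtility b := funext fun s => by rw [hu, expUtility, Fintype.card_fin]
  have hcost (q : Fin N → ℝ) := sInf_range_sub_expUtility_const_sub hb q
  simp only [Fintype.card_fin] at hcost
  refine ⟨hcost, ?_, fun i => by simpa using isLUB_expUtility_sub hb i⟩
  rw [hcost 0]
  simp [Nat.one_le_iff_ne_zero.1 hN]
end

section
/- Let b > 0 and θ ∈ ℝ^N, and define the Quad-SCPM utility u(s) = sup_{v ∈ ℝ^N, v ≤ s} (Σ_i θ_i v_i − (1/(4b)) · Σ_i v_i²). Then for every p ∈ ℝ^N with p_i ≥ 0 for all i, the supremum over s ∈ ℝ^N of u(s) − Σ_i p_i s_i equals b · Σ_i (p_i − θ_i)²; i.e., the penalty function of the Quad-SCPM is L(p) = b · ‖p − θ‖₂², the squared 2-norm distance from the prior θ scaled by b. -/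
/-!
Since prices are nonnegative, replacing the concave quadratic `g v = θ ⬝ v - ‖v‖² / (4b)` by its
monotone hull `u s = sup_{v ≤ s} g v` does not change the conjugate `sup (· - p ⬝ ·)`: each
`g v - p ⬝ v` is bounded by `u v - p ⬝ v`, and conversely `p ⬝ v ≤ p ⬝ s` for `v ≤ s`.
The conjugate of `g` separates over coordinates, where completing the square gives
`a v - v² / (4b) ≤ b a²`, attained at `v = 2 b a`.
-/

open Finset

theorem isLUB_sub_price_of_isLUB_Iic {ι : Type*} [Fintype ι] {g u : (ι → ℝ) → ℝ}
    (hu : ∀ s, IsLUB {y | ∃ v ≤ s, y = g v} (u s)) {p : ι → ℝ} (hp : 0 ≤ p) {c : ℝ}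
    (hc : IsLUB {y | ∃ v, y = g v - ∑ i, p i * v i} c) :
    IsLUB {y | ∃ s, y = u s - ∑ i, p i * s i} c := by
  constructor
  · rintro _ ⟨s, rfl⟩
    suffices u s ≤ ∑ i, p i * s i + c by linarith
    refine (hu s).2 ?_
    rintro _ ⟨v, hvs, rfl⟩
    have hprice : ∑ i, p i * v i ≤ ∑ i, p i * s i :=
      sum_le_sum fun i _ => mul_le_mul_of_nonneg_left (hvs i) (hp i)
    have hconj : g v - ∑ i, p i * v i ≤ c := hc.1 ⟨v, rfl⟩
    linarith
  · intro y hy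
    refine hc.2 ?_
    rintro _ ⟨v, rfl⟩
    have hgu : g v ≤ u v := (hu v).1 ⟨v, le_rfl, rfl⟩
    have hhull : u v - ∑ i, p i * v i ≤ y := hy ⟨v, rfl⟩
    linarith

theorem mul_sub_sq_div_le {b : ℝ} (hb : 0 < b) (a v : ℝ) :
    a * v - 1 / (4 * b) * v ^ 2 ≤ b * a ^ 2 := by
  have hsq : 0 ≤ (v - 2 * b * a) ^ 2 / (4 * b) := by positivity
  have hid : b * a ^ 2 - (a * v - 1 / (4 * b) * v ^ 2) = (v - 2 * b * a) ^ 2 / (4 * b) := by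
    field_simp
    ring
  linarith

theorem mul_sub_sq_div_eq {b : ℝ} (hb : 0 < b) (a : ℝ) :
    a * (2 * b * a) - 1 / (4 * b) * (2 * b * a) ^ 2 = b * a ^ 2 := by
  field_simp
  ring

theorem quad_sub_price_eq_sum {ι : Type*} [Fintype ι] (b : ℝ) (θ p v : ι → ℝ) :
    (∑ i, θ i * v i) - 1 / (4 * b) * ∑ i, v i ^ 2 - ∑ i, p i * v i
      = ∑ i, ((θ i - p i) * v i - 1 / (4 * b) * v i ^ 2) := by
  simp only [mul_sum, ← sum_sub_distrib]
  exact sum_congr rfl fun i _ => by ring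

theorem isGreatest_quad_sub_price {ι : Type*} [Fintype ι] {b : ℝ} (hb : 0 < b)
    (θ p : ι → ℝ) :
    IsGreatest {y | ∃ v : ι → ℝ,
        y = (∑ i, θ i * v i) - 1 / (4 * b) * ∑ i, v i ^ 2 - ∑ i, p i * v i}
      (b * ∑ i, (p i - θ i) ^ 2) := by
  have hsq : b * ∑ i, (p i - θ i) ^ 2 = ∑ i, b * (θ i - p i) ^ 2 := by
    rw [mul_sum]
    exact sum_congr rfl fun i _ => by ring
  constructor
  · refine ⟨fun i => 2 * b * (θ i - p i), ?_⟩
    rw [quad_sub_price_eq_sum, hsq]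
    exact sum_congr rfl fun i _ => (mul_sub_sq_div_eq hb _).symm
  · rintro _ ⟨v, rfl⟩
    rw [quad_sub_price_eq_sum, hsq]
    exact sum_le_sum fun i _ => mul_sub_sq_div_le hb _ _

theorem quad_scpm_penalty_is_squared_distance_general {N : ℕ}
    (b : ℝ) (hb : 0 < b) (θ : Fin N → ℝ)
    (u : (Fin N → ℝ) → ℝ)
    (hu : ∀ s : Fin N → ℝ,
      IsLUB {y : ℝ | ∃ v : Fin N → ℝ, (∀ i, v i ≤ s i) ∧
        y = (∑ i, θ i * v i) - (1 / (4 * b)) * ∑ i, (v i) ^ 2} (u s)) :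
    ∀ p : Fin N → ℝ, (∀ i, 0 ≤ p i) →
      IsLUB {y : ℝ | ∃ s : Fin N → ℝ, y = u s - ∑ i, p i * s i}
        (b * ∑ i, (p i - θ i) ^ 2) :=
  fun p hp => isLUB_sub_price_of_isLUB_Iic hu hp (isGreatest_quad_sub_price hb θ p).isLUB

/-- For the Quad-SCPM utility
`u(s) = sup_{v ≤ s} (Σ_i θ_i v_i − (1/(4b)) Σ_i v_i²)`, the penalty function
at every nonnegative `p` is `sup_s (u(s) − Σ_i p_i s_i) = b Σ_i (p_i − θ_i)²`,
the squared 2-norm distance from the prior scaled by `b`. -/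
theorem quad_scpm_penalty_is_squared_distance {N : ℕ} (hN : 1 ≤ N)
    (b : ℝ) (hb : 0 < b) (θ : Fin N → ℝ)
    (u : (Fin N → ℝ) → ℝ)
    (hu : ∀ s : Fin N → ℝ,
      IsLUB {y : ℝ | ∃ v : Fin N → ℝ, (∀ i, v i ≤ s i) ∧
        y = (∑ i, θ i * v i) - (1 / (4 * b)) * ∑ i, (v i) ^ 2} (u s)) :
    ∀ p : Fin N → ℝ, (∀ i, 0 ≤ p i) →
      IsLUB {y : ℝ | ∃ s : Fin N → ℝ, y = u s - ∑ i, p i * s i}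
        (b * ∑ i, (p i - θ i) ^ 2) :=
  quad_scpm_penalty_is_squared_distance_general b hb θ u hu
end
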